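/- For β > 0, ε > 0 and every n ≥ 1, the n-th β-derivative of the Bose-Einstein factor b₋(β,ε) = 1/(e^{βε} - 1) equals (-ε)^n · Σ_{k=1}^{n} A(n,k-1) · b₋(β,ε)^{n+1-k} · b₊(β,ε)^{k}, where A(n,j) are the Eulerian numbers and b₊(β,ε) = -1/(e^{-βε}-1). -/

import Mathlib

/-- Eulerian number `A n j`: the number of permutations of `{1,…,n}` with exactly `j` descents. -/
def eulerianNumber (n j : ℕ) : ℕ :=
  (Finset.univ.filter fun σ : Equiv.Perm (Fin n) =>
    (Finset.univ.filter fun i : Fin n =>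
      ∃ h : (i : ℕ) + 1 < n, σ ⟨(i : ℕ) + 1, h⟩ < σ i).card = j).card

/-!
Write `u = b₋(β, ε)`. Then `b₊ = 1 + u` and `∂u/∂β = -ε u (1 + u)`, so differentiating a monomial
gives `∂(u^a (1 + u)^b) = -ε (a u^a (1 + u)^(b+1) + b u^(a+1) (1 + u)^b)`. By induction, the `n`-th
derivative of `u` is `(-ε)^n ∑_{σ ∈ S_n} u^(n - des σ) (1 + u)^(des σ + 1)`: every `σ ∈ S_(n+1)`
arises in exactly one way by inserting the value `n + 1` into some `τ ∈ S_n`, and of the `n + 1`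
insertion positions, the `des τ + 1` ones at the end or right after a descent keep the number of
descents, while the other `n - des τ` add one. Grouping permutations by their number of descents
gives the Eulerian numbers.
-/

open Finset Equiv

lemma Fin.val_succAbove_eq_ite {n : ℕ} (p : Fin (n + 1)) (i : Fin n) :
    (p.succAbove i : ℕ) = if (i : ℕ) < p then (i : ℕ) else (i : ℕ) + 1 := by
  unfold Fin.succAbove
  split_ifs <;> simp_all [Fin.lt_def]

namespace Equiv.Perm

variable {n : ℕ}

def descents (σ : Perm (Fin n)) : Finset (Fin n) :=
  univ.filter fun i => ∃ h : (i : ℕ) + 1 < n, σ ⟨(i : ℕ) + 1, h⟩ < σ i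

lemma mem_descents {σ : Perm (Fin n)} {i : Fin n} :
    i ∈ σ.descents ↔ ∃ i' : Fin n, (i' : ℕ) = i + 1 ∧ σ i' < σ i := by
  simp only [descents, mem_filter, mem_univ, true_and]
  constructor
  · rintro ⟨h, hlt⟩
    exact ⟨_, rfl, hlt⟩
  · rintro ⟨i', hi', hlt⟩
    exact ⟨hi' ▸ i'.isLt, by simpa [← hi'] using hlt⟩

lemma val_add_one_lt_of_mem_descents {σ : Perm (Fin n)} {i : Fin n} (hi : i ∈ σ.descents) :
    (i : ℕ) + 1 < n := by
  obtain ⟨i', hi', -⟩ := mem_descents.mp hi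
  omega

lemma card_descents_lt (hn : 0 < n) (σ : Perm (Fin n)) : #σ.descents < n := by
  calc #σ.descents ≤ #(univ.erase (⟨n - 1, by omega⟩ : Fin n)) := by
        refine card_le_card fun i hi => mem_erase.mpr ⟨fun h => ?_, mem_univ _⟩
        have := val_add_one_lt_of_mem_descents hi
        simp [h] at this
        omega
    _ < n := by simp [hn]

lemma sum_comp_card_descents {M : Type*} [AddCommMonoid M] (hn : 0 < n) (F : ℕ → M) :
    ∑ σ : Perm (Fin n), F #σ.descents = ∑ j ∈ range n, eulerianNumber n j • F j := by
  rw [← sum_fiberwise_of_maps_to (g := fun σ : Perm (Fin n) => #σ.descents)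
    fun σ _ => mem_range.mpr (card_descents_lt hn σ)]
  refine sum_congr rfl fun j _ => ?_
  rw [sum_congr rfl fun σ hσ => congrArg F (mem_filter.mp hσ).2, sum_const]
  rfl

/-- The permutation of `Fin (n + 1)` whose sequence of values is that of `τ` with the maximal
value `Fin.last n` inserted at position `p`. -/
def insertMax (τ : Perm (Fin n)) (p : Fin (n + 1)) : Perm (Fin (n + 1)) :=
  ((finSuccEquiv' p).trans τ.optionCongr).trans (finSuccEquiv' (Fin.last n)).symm

@[simp]
lemma insertMax_apply_self (τ : Perm (Fin n)) (p : Fin (n + 1)) :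
    insertMax τ p p = Fin.last n := by
  simp [insertMax, finSuccEquiv'_at, finSuccEquiv'_symm_none]

@[simp]
lemma insertMax_apply_succAbove (τ : Perm (Fin n)) (p : Fin (n + 1)) (i : Fin n) :
    insertMax τ p (p.succAbove i) = (τ i).castSucc := by
  simp [insertMax, finSuccEquiv'_succAbove, finSuccEquiv'_symm_some, Fin.succAbove_last]

lemma insertMax_bijective :
    Function.Bijective fun x : Perm (Fin n) × Fin (n + 1) => insertMax x.1 x.2 := by
  rw [Fintype.bijective_iff_injective_and_card]
  refine ⟨fun ⟨τ, p⟩ ⟨τ', p'⟩ h => ?_, by simp [Fintype.card_perm, Nat.factorial_succ, mul_comm]⟩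
  simp only at h
  obtain rfl : p = p' := (insertMax τ' p').injective <| by
    rw [insertMax_apply_self, ← h, insertMax_apply_self]
  obtain rfl : τ = τ' := Equiv.ext fun i => Fin.castSucc_injective _ <| by
    rw [← insertMax_apply_succAbove, ← insertMax_apply_succAbove, h]
  rfl

lemma self_mem_descents_insertMax (τ : Perm (Fin n)) (p : Fin (n + 1)) :
    p ∈ (insertMax τ p).descents ↔ (p : ℕ) < n := by
  simp only [mem_descents, Fin.exists_iff_succAbove p, insertMax_apply_self,
    insertMax_apply_succAbove, Fin.castSucc_lt_last, and_true, Fin.val_succAbove_eq_ite]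
  constructor
  · rintro (h | ⟨i, hi⟩)
    · omega
    · split_ifs at hi <;> omega
  · intro h
    exact .inr ⟨⟨p, h⟩, by simp⟩

lemma succAbove_mem_descents_insertMax (τ : Perm (Fin n)) (p : Fin (n + 1)) (i : Fin n) :
    p.succAbove i ∈ (insertMax τ p).descents ↔ i ∈ τ.descents ∧ i.succ ≠ p := by
  have hnext (i' : Fin n) : (p.succAbove i' : ℕ) = p.succAbove i + 1 ↔
      (i' : ℕ) = i + 1 ∧ i.succ ≠ p := by
    rw [Fin.val_succAbove_eq_ite, Fin.val_succAbove_eq_ite, Ne, Fin.ext_iff, Fin.val_succ]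
    split_ifs <;> omega
  have hlast : ¬ Fin.last n < (τ i).castSucc := not_lt.mpr (Fin.le_last _)
  simp only [mem_descents, Fin.exists_iff_succAbove p, insertMax_apply_self,
    insertMax_apply_succAbove, hnext, Fin.castSucc_lt_castSucc_iff, hlast, and_false, false_or]
  exact ⟨fun ⟨i', ⟨hi', hne⟩, hlt⟩ => ⟨⟨i', hi', hlt⟩, hne⟩,
    fun ⟨⟨i', hi', hlt⟩, hne⟩ => ⟨i', ⟨hi', hne⟩, hlt⟩⟩

def stablePositions (τ : Perm (Fin n)) : Finset (Fin (n + 1)) :=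
  insert (Fin.last n) (τ.descents.map (Fin.succEmb n))

lemma last_notMem_map_succEmb_descents (τ : Perm (Fin n)) :
    Fin.last n ∉ τ.descents.map (Fin.succEmb n) := by
  simp only [mem_map, Fin.coe_succEmb, not_exists, not_and]
  intro j hj h
  have := val_add_one_lt_of_mem_descents hj
  simp [Fin.ext_iff] at h
  omega

lemma card_stablePositions (τ : Perm (Fin n)) : #τ.stablePositions = #τ.descents + 1 := by
  rw [stablePositions, card_insert_of_notMem (last_notMem_map_succEmb_descents τ), card_map]

lemma card_filter_succ_ne_descents (τ : Perm (Fin n)) (p : Fin (n + 1)) :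
    #{j ∈ τ.descents | j.succ ≠ p} + (if p ∈ τ.descents.map (Fin.succEmb n) then 1 else 0) =
      #τ.descents := by
  split_ifs with hp
  · obtain ⟨j₀, hj₀, rfl⟩ := mem_map.mp hp
    simp only [Fin.coe_succEmb, ne_eq, Fin.succ_inj, filter_ne', card_erase_of_mem hj₀]
    have := card_pos.mpr ⟨j₀, hj₀⟩
    omega
  · rw [add_zero, filter_true_of_mem fun j hj => ?_]
    exact fun h => hp (mem_map.mpr ⟨j, hj, h⟩)

lemma card_descents_insertMax (τ : Perm (Fin n)) (p : Fin (n + 1)) :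
    #(insertMax τ p).descents =
      if p ∈ τ.stablePositions then #τ.descents else #τ.descents + 1 := by
  have hsplit : #(insertMax τ p).descents =
      (if (p : ℕ) < n then 1 else 0) + #{j ∈ τ.descents | j.succ ≠ p} := by
    rw [← filter_univ_mem (insertMax τ p).descents, card_filter, Fin.sum_univ_succAbove _ p]
    simp only [self_mem_descents_insertMax, succAbove_mem_descents_insertMax, sum_boole,
      ← filter_filter, filter_univ_mem, Nat.cast_id]
  have hcount := card_filter_succ_ne_descents τ p
  have hlast := last_notMem_map_succEmb_descents τ
  rw [hsplit]
  simp only [stablePositions, mem_insert]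
  by_cases hp : p = Fin.last n
  · subst hp
    simp_all
  · have : (p : ℕ) < n := Fin.val_lt_last hp
    split_ifs at hcount ⊢ <;> simp_all <;> omega

lemma sum_comp_card_descents_insertMax {M : Type*} [AddCommMonoid M] (τ : Perm (Fin n))
    (F : ℕ → M) :
    ∑ p, F #(insertMax τ p).descents =
      (#τ.descents + 1) • F #τ.descents + (n - #τ.descents) • F (#τ.descents + 1) := by
  simp only [card_descents_insertMax, apply_ite F]
  rw [sum_ite, sum_const, sum_const, filter_univ_mem, ← compl_filter, filter_univ_mem,
    card_compl, card_stablePositions, Fintype.card_fin, Nat.add_sub_add_right]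

lemma sum_perm_succ_comp_card_descents {M : Type*} [AddCommMonoid M] (F : ℕ → M) :
    ∑ σ : Perm (Fin (n + 1)), F #σ.descents = ∑ τ : Perm (Fin n),
      ((#τ.descents + 1) • F #τ.descents + (n - #τ.descents) • F (#τ.descents + 1)) := by
  rw [← insertMax_bijective.sum_comp, Fintype.sum_prod_type]
  exact sum_congr rfl fun τ _ => sum_comp_card_descents_insertMax τ F

end Equiv.Perm

section

variable {𝕜 : Type*} [NontriviallyNormedField 𝕜] {u : 𝕜 → 𝕜} {c x : 𝕜}

lemma HasDerivAt.pow_mul_one_add_pow (hu : HasDerivAt u (c * (u x * (1 + u x))) x) (a b : ℕ) :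
    HasDerivAt (fun y => u y ^ a * (1 + u y) ^ b)
      (c * (a * u x ^ a * (1 + u x) ^ (b + 1) + b * u x ^ (a + 1) * (1 + u x) ^ b)) x := by
  refine ((hu.fun_pow a).fun_mul ((hu.const_add 1).fun_pow b)).congr_deriv ?_
  cases a <;> cases b <;> simp <;> ring

theorem iteratedDeriv_eq_sum_descents {s : Set 𝕜} (hs : IsOpen s)
    (hu : ∀ x ∈ s, HasDerivAt u (c * (u x * (1 + u x))) x) {n : ℕ} (hn : 0 < n) (hx : x ∈ s) :
    iteratedDeriv n u x = c ^ n * ∑ σ : Perm (Fin n),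
      u x ^ (n - #σ.descents) * (1 + u x) ^ (#σ.descents + 1) := by
  induction n, hn using Nat.le_induction generalizing x with
  | base =>
    have hdes (σ : Perm (Fin 1)) : #σ.descents = 0 := by
      have := Perm.card_descents_lt one_pos σ
      omega
    rw [iteratedDeriv_one, (hu x hx).deriv, Fintype.sum_unique]
    simp [hdes]
  | succ n hn ih =>
    have hev : iteratedDeriv n u =ᶠ[nhds x] _ :=
      Filter.eventually_of_mem (hs.mem_nhds hx) fun y hy => ih hy
    have hderiv := (HasDerivAt.fun_sum fun σ (_ : σ ∈ (univ : Finset (Perm (Fin n)))) =>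
      (hu x hx).pow_mul_one_add_pow (n - #σ.descents) (#σ.descents + 1)).const_mul (c ^ n)
    rw [iteratedDeriv_succ, hev.deriv_eq, hderiv.deriv,
      Perm.sum_perm_succ_comp_card_descents fun d => u x ^ (n + 1 - d) * (1 + u x) ^ (d + 1),
      pow_succ, mul_assoc, mul_sum _ _ c]
    congr 1
    refine Fintype.sum_congr _ _ fun σ => ?_
    have hd := Perm.card_descents_lt hn σ
    rw [show n + 1 - #σ.descents = n - #σ.descents + 1 by omega, Nat.add_sub_add_right]
    simp only [nsmul_eq_mul]
    push_cast
    ring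

end

lemma Real.exp_sub_one_ne_zero {t : ℝ} (ht : t ≠ 0) : Real.exp t - 1 ≠ 0 :=
  sub_ne_zero.mpr fun h => ht (Real.exp_eq_one_iff t |>.mp h)

lemma Real.hasDerivAt_one_div_exp_mul_sub_one {ε x : ℝ} (hx : x * ε ≠ 0) :
    HasDerivAt (fun b => 1 / (Real.exp (b * ε) - 1))
      (-ε * (1 / (Real.exp (x * ε) - 1) * (1 + 1 / (Real.exp (x * ε) - 1)))) x := by
  have hne := Real.exp_sub_one_ne_zero hx
  have hexp : HasDerivAt (fun b => Real.exp (b * ε) - 1) (Real.exp (x * ε) * ε) x :=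
    ((hasDerivAt_mul_const ε).exp).sub_const 1
  simp only [one_div]
  refine (hexp.fun_inv hne).congr_deriv ?_
  field_simp
  ring

lemma Real.one_add_one_div_exp_sub_one {t : ℝ} (ht : t ≠ 0) :
    1 + 1 / (Real.exp t - 1) = -1 / (Real.exp (-t) - 1) := by
  have hne := Real.exp_sub_one_ne_zero ht
  rw [Real.exp_neg]
  field_simp
  rw [← neg_sub (Real.exp t) 1, div_neg, neg_neg, mul_div_cancel_right₀ _ hne, sub_add_cancel]

theorem stmt_7 (β ε : ℝ) (hβ : 0 < β) (hε : 0 < ε) (n : ℕ) (hn : 1 ≤ n) :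
    iteratedDeriv n (fun b : ℝ => 1 / (Real.exp (b * ε) - 1)) β =
      (-ε) ^ n * ∑ k ∈ Finset.Icc 1 n,
        (eulerianNumber n (k - 1) : ℝ) *
          (1 / (Real.exp (β * ε) - 1)) ^ (n + 1 - k) *
          (-1 / (Real.exp (-(β * ε)) - 1)) ^ k := by
  rw [iteratedDeriv_eq_sum_descents isOpen_Ioi
      (fun x hx => Real.hasDerivAt_one_div_exp_mul_sub_one (mul_pos hx hε).ne') hn hβ,
    ← Real.one_add_one_div_exp_sub_one (mul_pos hβ hε).ne']
  set u := 1 / (Real.exp (β * ε) - 1)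
  rw [Perm.sum_comp_card_descents hn fun d => u ^ (n - d) * (1 + u) ^ (d + 1),
    ← Ico_add_one_right_eq_Icc, sum_Ico_eq_sum_range, Nat.add_sub_cancel]
  refine congrArg _ (sum_congr rfl fun j _ => ?_)
  rw [add_tsub_cancel_left, add_comm 1 j, Nat.add_sub_add_right, nsmul_eq_mul, mul_assoc]
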